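/- arXiv:math/9911227 — 2 statements merged into one kernel-verified Lean document; each statement's English description precedes it below -/
import Mathlib

section
/- For a connected graph G, the following are equivalent: (i) G is a strong unique independence graph; (ii) G is bipartite and has a spanning tree that is a strong unique independence graph; (iii) G is bipartite and has an α⁻-stable spanning tree all of whose pendant vertices are contained in a color class of that tree whose cardinality is at least that of the other color class; (iv) G is an α⁻-stable bipartite graph having a unique stability system, and this stability system is one of the color classes of G. -/
/-!
A stability system `S` with `Sᶜ` stable is the only one iff every nonempty `X ⊆ Sᶜ` has more
than `#X` neighbours (Hall's condition with surplus one). In a tree this holds for a colour class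
all of whose vertices have degree at least two, i.e. when all leaves lie in the other class.
Conversely, Rado's exchange argument pares the neighbourhoods of the vertices of `Sᶜ` down to
pairs with the same surplus; these pairs form a forest, which extends to a spanning tree of `G`.
As a connected graph has only one bipartition, the property passes from a spanning tree to `G`.
-/

open Finset

variable {V : Type*}

/-- A stable (independent) set of vertices of `G`. -/
def IsStableSet (G : SimpleGraph V) (S : Finset V) : Prop :=
  ∀ u ∈ S, ∀ v ∈ S, ¬ G.Adj u v

/-- The stability number `α(G)`: the maximum cardinality of a stable set. -/
noncomputable def stabNum (G : SimpleGraph V) [Fintype V] : ℕ :=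
  sSup {n : ℕ | ∃ S : Finset V, IsStableSet G S ∧ S.card = n}

/-- A stability system of `G`: a stable set of maximum cardinality. -/
def IsStabSystem (G : SimpleGraph V) [Fintype V] (S : Finset V) : Prop :=
  IsStableSet G S ∧ S.card = stabNum G

/-- `G` is α⁻-stable: deleting any edge leaves the stability number unchanged. -/
def AlphaMinusStable (G : SimpleGraph V) [Fintype V] : Prop :=
  ∀ u v : V, G.Adj u v → stabNum (G.deleteEdges {s(u, v)}) = stabNum G

/-- `G` is α⁺-stable: adding any edge of the complement leaves the stability
number unchanged. -/
def AlphaPlusStable (G : SimpleGraph V) [Fintype V] : Prop :=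
  ∀ u v : V, u ≠ v → ¬ G.Adj u v →
    stabNum (G ⊔ SimpleGraph.fromEdgeSet {s(u, v)}) = stabNum G

/-- A matching of `G`, viewed as a set of pairwise non-incident edges. -/
def IsMatchingSet (G : SimpleGraph V) (M : Finset (Sym2 V)) : Prop :=
  (↑M : Set (Sym2 V)) ⊆ G.edgeSet ∧
    ∀ e ∈ M, ∀ f ∈ M, e ≠ f → ∀ v : V, ¬ (v ∈ e ∧ v ∈ f)

/-- The matching number `μ(G)`. -/
noncomputable def matchNum (G : SimpleGraph V) [Fintype V] : ℕ :=
  sSup {n : ℕ | ∃ M : Finset (Sym2 V), IsMatchingSet G M ∧ M.card = n}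

/-- A maximum matching of `G`. -/
def IsMaximumMatching (G : SimpleGraph V) [Fintype V] (M : Finset (Sym2 V)) : Prop :=
  IsMatchingSet G M ∧ M.card = matchNum G

/-- A perfect matching of `G`: a matching covering every vertex. -/
def IsPerfectMatchingSet (G : SimpleGraph V) (M : Finset (Sym2 V)) : Prop :=
  IsMatchingSet G M ∧ ∀ v : V, ∃ e ∈ M, v ∈ e

/-- A pendant vertex: a vertex of degree one. -/
def IsPendant (G : SimpleGraph V) (v : V) : Prop :=
  (G.neighborSet v).ncard = 1

/-- A set `D` is 2-dominating: every vertex outside `D` has at least two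
neighbors in `D`. -/
def Is2Dominating (G : SimpleGraph V) (D : Finset V) : Prop :=
  ∀ v : V, v ∉ D → 2 ≤ ({u : V | u ∈ D ∧ G.Adj v u}).ncard

/-- A chordal graph: no induced cycle on four or more vertices. -/
def IsChordal (G : SimpleGraph V) : Prop :=
  ∀ n : ℕ, 4 ≤ n → IsEmpty (SimpleGraph.cycleGraph n ↪g G)

/-- A bipartite graph: the vertex set is partitioned into two stable sets. -/
def IsBipartiteGr (G : SimpleGraph V) [Fintype V] [DecidableEq V] : Prop :=
  ∃ C : Finset V, IsStableSet G C ∧ IsStableSet G Cᶜ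

/-- A strong unique independence graph: a graph with a unique stability system
whose complement is also stable. -/
def IsStrongUniqueIndep (G : SimpleGraph V) [Fintype V] [DecidableEq V] : Prop :=
  ∃ S : Finset V, IsStabSystem G S ∧ (∀ S' : Finset V, IsStabSystem G S' → S' = S) ∧
    IsStableSet G Sᶜ

/-- A bistable bipartite graph: its two color classes are its only two
stability systems. -/
def IsBistable (G : SimpleGraph V) [Fintype V] [DecidableEq V] : Prop :=
  ∃ A : Finset V, IsStableSet G A ∧ IsStableSet G Aᶜ ∧
    IsStabSystem G A ∧ IsStabSystem G Aᶜ ∧ A ≠ Aᶜ ∧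
    ∀ S : Finset V, IsStabSystem G S → S = A ∨ S = Aᶜ

/-- A vertex cover of `G`. -/
def IsVertexCover (G : SimpleGraph V) (C : Finset V) : Prop :=
  ∀ u v : V, G.Adj u v → u ∈ C ∨ v ∈ C

/-- A minimum vertex cover of `G`. -/
def IsMinVertexCover (G : SimpleGraph V) [Fintype V] (C : Finset V) : Prop :=
  IsVertexCover G C ∧ ∀ C' : Finset V, IsVertexCover G C' → C.card ≤ C'.card


section HallSurplus

variable {ι α : Type*} [DecidableEq α]

def HasHallSurplus (s : Finset ι) (P : ι → Finset α) : Prop :=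
  ∀ X ⊆ s, X.Nonempty → X.card < (X.biUnion P).card

theorem biUnion_update_of_mem [DecidableEq ι] {P : ι → Finset α} {X : Finset ι} {i : ι}
    (hi : i ∈ X) (A : Finset α) :
    X.biUnion (Function.update P i A) = (X.erase i).biUnion P ∪ A := by
  conv_lhs => rw [← insert_erase hi]
  rw [biUnion_insert, Function.update_self, union_comm]
  congr 1
  exact biUnion_congr rfl fun j hj => Function.update_of_ne (ne_of_mem_erase hj) _ _

namespace HasHallSurplus

variable {s t : Finset ι} {P Q : ι → Finset α}

theorem anti (hts : t ⊆ s) (h : HasHallSurplus s P) : HasHallSurplus t P :=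
  fun X hX hne => h X (hX.trans hts) hne

theorem mono (hPQ : ∀ i ∈ s, P i ⊆ Q i) (h : HasHallSurplus s P) : HasHallSurplus s Q :=
  fun X hX hne => (h X hX hne).trans_le <|
    card_le_card <| biUnion_mono fun i hi => hPQ i (hX hi)

theorem one_lt_card (h : HasHallSurplus s P) {i : ι} (hi : i ∈ s) : 1 < (P i).card := by
  simpa using h {i} (singleton_subset_iff.2 hi) (singleton_nonempty i)

variable [DecidableEq ι]

theorem mem_of_card_biUnion_update_le (h : HasHallSurplus s P) {X : Finset ι} (hXs : X ⊆ s)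
    (hXne : X.Nonempty) {i : ι} {A : Finset α}
    (hX : (X.biUnion (Function.update P i A)).card ≤ X.card) : i ∈ X := by
  by_contra hi
  have hupd : X.biUnion (Function.update P i A) = X.biUnion P :=
    biUnion_congr rfl fun j hj => Function.update_of_ne (ne_of_mem_of_not_mem hj hi) _ _
  exact (h X hXs hXne).not_ge (hupd ▸ hX)

/-- Rado's exchange step: if deleting `x` and deleting `y` from `P i` both destroyed the surplus,
the two witnesses would violate it for their union or their intersection (submodularity). -/
theorem update_erase_or_update_erase (h : HasHallSurplus s P) {i : ι} (hi : i ∈ s)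
    (hcard : 3 ≤ (P i).card) {x y : α} (hx : x ∈ P i) (hy : y ∈ P i) (hxy : x ≠ y) :
    HasHallSurplus s (Function.update P i ((P i).erase x)) ∨
      HasHallSurplus s (Function.update P i ((P i).erase y)) := by
  by_contra! hfail
  simp only [HasHallSurplus, not_forall, not_lt] at hfail
  obtain ⟨⟨X, hXs, hXne, hX⟩, ⟨Y, hYs, hYne, hY⟩⟩ := hfail
  have hiX := h.mem_of_card_biUnion_update_le hXs hXne hX
  have hiY := h.mem_of_card_biUnion_update_le hYs hYne hY
  rw [biUnion_update_of_mem hiX] at hX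
  rw [biUnion_update_of_mem hiY] at hY
  set X' := X.erase i
  set Y' := Y.erase i
  set A := X'.biUnion P ∪ (P i).erase x
  set B := Y'.biUnion P ∪ (P i).erase y
  have hX' : X'.card + 1 = X.card := card_erase_add_one hiX
  have hY' : Y'.card + 1 = Y.card := card_erase_add_one hiY
  have hi' : i ∉ X' ∪ Y' := by simp [X', Y']
  have hunion : (X' ∪ Y').card + 1 < (A ∪ B).card := by
    have hsub : insert i (X' ∪ Y') ⊆ s := insert_subset hi <|
      union_subset ((erase_subset _ _).trans hXs) ((erase_subset _ _).trans hYs)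
    have hcover : (insert i (X' ∪ Y')).biUnion P ⊆ A ∪ B := by
      intro a ha
      simp only [mem_biUnion, mem_insert, mem_union] at ha
      obtain ⟨j, rfl | hj | hj, hja⟩ := ha
      · by_cases hax : a = x
        · exact mem_union_right _ (mem_union_right _ (mem_erase.2 ⟨hax ▸ hxy, hax ▸ hja⟩))
        · exact mem_union_left _ (mem_union_right _ (mem_erase.2 ⟨hax, hja⟩))
      · exact mem_union_left _ (mem_union_left _ (mem_biUnion.2 ⟨j, hj, hja⟩))
      · exact mem_union_right _ (mem_union_left _ (mem_biUnion.2 ⟨j, hj, hja⟩))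
    have := h _ hsub (insert_nonempty _ _)
    rw [card_insert_of_notMem hi'] at this
    exact this.trans_le (card_le_card hcover)
  have hinter : (X' ∩ Y').card < (A ∩ B).card := by
    rcases (X' ∩ Y').eq_empty_or_nonempty with hempty | hne
    · obtain ⟨z, hz⟩ : (((P i).erase x).erase y).Nonempty := by
        rw [← card_pos, card_erase_of_mem (mem_erase.2 ⟨hxy.symm, hy⟩), card_erase_of_mem hx]
        omega
      rw [hempty, card_empty, card_pos]
      have hzx := mem_of_mem_erase hz
      exact ⟨z, mem_inter.2 ⟨mem_union_right _ hzx,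
        mem_union_right _ (mem_erase.2 ⟨ne_of_mem_erase hz, mem_of_mem_erase hzx⟩)⟩⟩
    · have hsub : X' ∩ Y' ⊆ s := inter_subset_left.trans ((erase_subset _ _).trans hXs)
      refine (h _ hsub hne).trans_le (card_le_card fun a ha => ?_)
      obtain ⟨j, hj, hja⟩ := mem_biUnion.1 ha
      exact mem_inter.2 ⟨mem_union_left _ (mem_biUnion.2 ⟨j, (mem_inter.1 hj).1, hja⟩),
        mem_union_left _ (mem_biUnion.2 ⟨j, (mem_inter.1 hj).2, hja⟩)⟩
  have := card_union_add_card_inter A B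
  have := card_union_add_card_inter X' Y'
  omega

theorem exists_card_eq_two (h : HasHallSurplus s P) :
    ∃ Q : ι → Finset α, (∀ i ∈ s, Q i ⊆ P i ∧ (Q i).card = 2) ∧ HasHallSurplus s Q := by
  induction hn : ∑ i ∈ s, (P i).card using Nat.strong_induction_on generalizing P with
  | _ n ih =>
  by_cases hbig : ∃ i ∈ s, 3 ≤ (P i).card
  · obtain ⟨i, hi, h3⟩ := hbig
    obtain ⟨x, hx, y, hy, hxy⟩ := Finset.one_lt_card.1 (by omega : 1 < (P i).card)
    obtain ⟨z, hz, hsur⟩ :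
        ∃ z ∈ P i, HasHallSurplus s (Function.update P i ((P i).erase z)) := by
      rcases h.update_erase_or_update_erase hi h3 hx hy hxy with h' | h'
      exacts [⟨x, hx, h'⟩, ⟨y, hy, h'⟩]
    have hle : ∀ j, Function.update P i ((P i).erase z) j ⊆ P j := by
      intro j
      by_cases hj : j = i
      · subst hj
        simpa using erase_subset z (P j)
      · simp [hj]
    have hlt : ∑ j ∈ s, (Function.update P i ((P i).erase z) j).card < n := by
      refine hn ▸ sum_lt_sum (fun j _ => card_le_card (hle j)) ⟨i, hi, ?_⟩
      rw [Function.update_self, card_erase_of_mem hz]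
      omega
    obtain ⟨Q, hQ, hQs⟩ := ih _ hlt hsur rfl
    exact ⟨Q, fun j hj => ⟨(hQ j hj).1.trans (hle j), (hQ j hj).2⟩, hQs⟩
  · push Not at hbig
    refine ⟨P, fun i hi => ⟨subset_rfl, ?_⟩, h⟩
    have := h.one_lt_card hi
    have := hbig i hi
    omega

theorem exists_mem_forall_mem_eq (h : HasHallSurplus s P) (hP : ∀ i ∈ s, (P i).card = 2)
    (hs : s.Nonempty) : ∃ i ∈ s, ∃ a ∈ P i, ∀ j ∈ s, a ∈ P j → j = i := by
  by_contra! hshared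
  have hcount : (s.biUnion P).card * 2 ≤ s.card * 2 := by
    refine card_mul_le_card_mul (fun a j => a ∈ P j) (fun a ha => ?_) (fun j hj => ?_)
    · obtain ⟨i, hi, hai⟩ := mem_biUnion.1 ha
      obtain ⟨j, hj, haj, hji⟩ := hshared i hi a hai
      exact Finset.one_lt_card.2 ⟨j, by simp [bipartiteAbove, hj, haj],
        i, by simp [bipartiteAbove, hi, hai], hji⟩
    · exact (hP j hj).symm ▸ card_le_card fun a ha => (mem_filter.1 ha).2
  have := h s subset_rfl hs
  omega

end HasHallSurplus

end HallSurplus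

section Stability

variable {G H : SimpleGraph V} {S R : Finset V}

theorem IsStableSet.anti (hHG : H ≤ G) (hS : IsStableSet G S) : IsStableSet H S :=
  fun u hu v hv huv => hS u hu v hv (hHG huv)

theorem isPendant_iff_card_neighborFinset {v : V} [Fintype (G.neighborSet v)] :
    IsPendant G v ↔ (G.neighborFinset v).card = 1 := by
  rw [IsPendant, Set.ncard_eq_toFinset_card', SimpleGraph.neighborFinset_def]

theorem isStableSet_of_isStableSet_deleteEdges {u v : V}
    (hR : IsStableSet (G.deleteEdges {s(u, v)}) R) (huv : ¬ (u ∈ R ∧ v ∈ R)) :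
    IsStableSet G R := by
  intro x hx y hy hxy
  refine hR x hx y hy (SimpleGraph.deleteEdges_adj.2 ⟨hxy, fun he => huv ?_⟩)
  rcases Sym2.eq_iff.1 (Set.mem_singleton_iff.1 he) with ⟨rfl, rfl⟩ | ⟨rfl, rfl⟩
  exacts [⟨hx, hy⟩, ⟨hy, hx⟩]

variable [Fintype V]

theorem IsStableSet.card_le_stabNum (hS : IsStableSet G S) : S.card ≤ stabNum G :=
  le_csSup ⟨Fintype.card V, by rintro n ⟨T, -, rfl⟩; exact card_le_univ T⟩ ⟨S, hS, rfl⟩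

theorem stabNum_le {n : ℕ} (h : ∀ S, IsStableSet G S → S.card ≤ n) : stabNum G ≤ n :=
  csSup_le ⟨0, ∅, fun u hu => absurd hu (notMem_empty u), rfl⟩ fun _ ⟨S, hS, hm⟩ => hm ▸ h S hS

theorem stabNum_anti (hHG : H ≤ G) : stabNum G ≤ stabNum H :=
  stabNum_le fun _ hS => (hS.anti hHG).card_le_stabNum

theorem IsStableSet.isStabSystem (hS : IsStableSet G S) (hcard : stabNum G ≤ S.card) :
    IsStabSystem G S :=
  ⟨hS, le_antisymm hS.card_le_stabNum hcard⟩

section Surplus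

variable [DecidableEq V] [DecidableRel G.Adj] {B : Finset V}

theorem card_lt_card_compl_of_hasHallSurplus (hB : IsStableSet G B)
    (h : HasHallSurplus B (G.neighborFinset ·)) (hR : IsStableSet G R) (hRB : (R ∩ B).Nonempty) :
    R.card < Bᶜ.card := by
  have hN : (R ∩ B).biUnion (G.neighborFinset ·) ⊆ Bᶜ \ R := by
    intro a ha
    obtain ⟨x, hx, hxa⟩ := mem_biUnion.1 ha
    rw [SimpleGraph.mem_neighborFinset] at hxa
    exact mem_sdiff.2 ⟨mem_compl.2 fun haB => hB x (mem_inter.1 hx).2 a haB hxa,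
      fun haR => hR x (mem_inter.1 hx).1 a haR hxa⟩
  have hRB' : R \ B ⊆ Bᶜ ∩ R := fun a ha => by
    simp only [mem_sdiff, mem_inter, mem_compl] at ha ⊢
    exact ⟨ha.2, ha.1⟩
  have := h _ inter_subset_right hRB
  have := card_le_card hN
  have := card_le_card hRB'
  have := card_inter_add_card_sdiff Bᶜ R
  have := card_inter_add_card_sdiff R B
  omega

theorem eq_compl_of_hasHallSurplus (hB : IsStableSet G B)
    (h : HasHallSurplus B (G.neighborFinset ·)) (hR : IsStableSet G R) (hcard : Bᶜ.card ≤ R.card) :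
    R = Bᶜ := by
  rcases (R ∩ B).eq_empty_or_nonempty with hRB | hRB
  · refine eq_of_subset_of_card_le (fun v hv => mem_compl.2 fun hvB => ?_) hcard
    exact notMem_empty v (hRB ▸ mem_inter.2 ⟨hv, hvB⟩)
  · exact absurd hcard (card_lt_card_compl_of_hasHallSurplus hB h hR hRB).not_ge

theorem isStrongUniqueIndep_of_hasHallSurplus (hB : IsStableSet G B) (hBc : IsStableSet G Bᶜ)
    (h : HasHallSurplus B (G.neighborFinset ·)) : IsStrongUniqueIndep G := by
  have hnum : stabNum G = Bᶜ.card := by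
    refine le_antisymm (stabNum_le fun R hR => ?_) hBc.card_le_stabNum
    by_contra! hlt
    exact hlt.ne' (congrArg card (eq_compl_of_hasHallSurplus hB h hR hlt.le))
  refine ⟨Bᶜ, ⟨hBc, hnum.symm⟩, fun S' hS' => ?_, by rwa [compl_compl]⟩
  exact eq_compl_of_hasHallSurplus hB h hS'.1 (hS'.2.trans hnum).ge

/-- If some `X ⊆ Sᶜ` had at most `#X` neighbours, trading them for `X` would give a second
stability system. -/
theorem IsStabSystem.hasHallSurplus_compl (hS : IsStabSystem G S)
    (huniq : ∀ S', IsStabSystem G S' → S' = S) (hSc : IsStableSet G Sᶜ) :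
    HasHallSurplus Sᶜ (G.neighborFinset ·) := by
  intro X hXS hXne
  by_contra! hle
  set N := X.biUnion (G.neighborFinset ·)
  have hmemN : ∀ x ∈ X, ∀ a, G.Adj x a → a ∈ N := fun x hx a hxa =>
    mem_biUnion.2 ⟨x, hx, (SimpleGraph.mem_neighborFinset _ _ _).2 hxa⟩
  have hNS : N ⊆ S := by
    intro a ha
    obtain ⟨x, hx, hxa⟩ := mem_biUnion.1 ha
    by_contra haS
    exact hSc x (hXS hx) a (mem_compl.2 haS) ((SimpleGraph.mem_neighborFinset _ _ _).1 hxa)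
  have hXS' : ∀ x ∈ X, x ∉ S := fun x hx => mem_compl.1 (hXS hx)
  have hR : IsStableSet G ((S \ N) ∪ X) := by
    intro u hu v hv huv
    simp only [mem_union, mem_sdiff] at hu hv
    rcases hu with ⟨huS, huN⟩ | huX <;> rcases hv with ⟨hvS, hvN⟩ | hvX
    · exact hS.1 u huS v hvS huv
    · exact huN (hmemN v hvX u huv.symm)
    · exact hvN (hmemN u huX v huv)
    · exact hSc u (hXS huX) v (hXS hvX) huv
  have hdisj : Disjoint (S \ N) X :=
    Finset.disjoint_right.2 fun x hx hxS => hXS' x hx (mem_sdiff.1 hxS).1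
  have hcard : stabNum G ≤ ((S \ N) ∪ X).card := by
    rw [card_union_of_disjoint hdisj, card_sdiff_of_subset hNS, ← hS.2]
    have := card_le_card hNS
    omega
  obtain ⟨x, hx⟩ := hXne
  have hxS := huniq _ (hR.isStabSystem hcard) ▸ mem_union_right _ hx
  exact hXS' x hx hxS

end Surplus

end Stability

section Consequences

variable [Fintype V] {G : SimpleGraph V} {S R : Finset V}

/-- A stable set of `G - uv` larger than `α(G)` contains `u` and `v`; deleting either one leaves
two different stability systems of `G`. -/
theorem alphaMinusStable_of_isStabSystem_unique
    (huniq : ∀ S', IsStabSystem G S' → S' = S) : AlphaMinusStable G := by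
  classical
  intro u v huv
  refine le_antisymm (stabNum_le fun R hR => ?_) (stabNum_anti (SimpleGraph.deleteEdges_le _))
  by_cases hboth : u ∈ R ∧ v ∈ R
  · by_contra! hlt
    have hsys : ∀ w ∈ R, w = u ∨ w = v → IsStabSystem G (R.erase w) := by
      rintro w hw hwuv
      refine (isStableSet_of_isStableSet_deleteEdges (fun x hx y hy => hR x (mem_of_mem_erase hx)
        y (mem_of_mem_erase hy)) ?_).isStabSystem ?_
      · rcases hwuv with rfl | rfl <;> simp
      · rw [card_erase_of_mem hw]
        omega
    have hu := huniq _ (hsys u hboth.1 (Or.inl rfl))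
    have hv := huniq _ (hsys v hboth.2 (Or.inr rfl))
    have : u ∈ R.erase v := mem_erase.2 ⟨huv.ne, hboth.1⟩
    rw [hv, ← hu] at this
    exact (notMem_erase u R) this
  · exact (isStableSet_of_isStableSet_deleteEdges hR hboth).card_le_stabNum

theorem IsStrongUniqueIndep.alphaMinusStable [DecidableEq V] (h : IsStrongUniqueIndep G) :
    AlphaMinusStable G :=
  let ⟨_, _, huniq, _⟩ := h
  alphaMinusStable_of_isStabSystem_unique huniq

section Bipartition

variable [DecidableEq V] {C D : Finset V}

theorem eq_or_eq_compl_of_isStableSet (hG : G.Connected) (hC : IsStableSet G C)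
    (hCc : IsStableSet G Cᶜ) (hD : IsStableSet G D) (hDc : IsStableSet G Dᶜ) : D = C ∨ D = Cᶜ := by
  have hflip : ∀ {E : Finset V}, IsStableSet G E → IsStableSet G Eᶜ →
      ∀ {u v}, G.Adj u v → (u ∈ E ↔ v ∉ E) := fun hE hEc u v huv =>
    ⟨fun hu hv => hE u hu v hv huv,
      fun hv => by_contra fun hu => hEc u (mem_compl.2 hu) v (mem_compl.2 hv) huv⟩
  have hwalk : ∀ {u v} (p : G.Walk u v), ((u ∈ C ↔ u ∈ D) ↔ (v ∈ C ↔ v ∈ D)) := by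
    intro u v p
    induction p with
    | nil => rfl
    | cons huv _ ih =>
      have := hflip hC hCc huv
      have := hflip hD hDc huv
      exact Iff.trans (by tauto) ih
  obtain ⟨v₀⟩ := hG.nonempty
  by_cases h₀ : v₀ ∈ C ↔ v₀ ∈ D
  · left
    ext v
    exact ((hwalk (hG.preconnected v₀ v).some).1 h₀).symm
  · right
    ext v
    have := (hwalk (hG.preconnected v₀ v).some).not.1 h₀
    rw [mem_compl]
    tauto

theorem IsStrongUniqueIndep.of_le {T : SimpleGraph V} (h : IsStrongUniqueIndep T) (hTG : T ≤ G)
    (hT : T.Connected) (hC : IsStableSet G C) (hCc : IsStableSet G Cᶜ) : IsStrongUniqueIndep G := by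
  obtain ⟨S, hS, huniq, hSc⟩ := h
  have hSG : IsStableSet G S ∧ IsStableSet G Sᶜ := by
    rcases eq_or_eq_compl_of_isStableSet hT (hC.anti hTG) (hCc.anti hTG) hS.1 hSc with rfl | rfl
    exacts [⟨hC, hCc⟩, ⟨hCc, by rwa [compl_compl]⟩]
  have hnum : stabNum G = stabNum T :=
    le_antisymm (stabNum_anti hTG) (hS.2 ▸ hSG.1.card_le_stabNum)
  refine ⟨S, ⟨hSG.1, hS.2.trans hnum.symm⟩, fun S' hS' => huniq S' ?_, hSG.2⟩
  exact ⟨hS'.1.anti hTG, hS'.2.trans hnum⟩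

end Bipartition

end Consequences

namespace SimpleGraph

variable {G : SimpleGraph V}

theorem Reachable.eq_of_forall_not_adj {u v : V} (h : G.Reachable u v) (hu : ∀ w, ¬ G.Adj u w) :
    u = v := by
  obtain ⟨p⟩ := h
  cases p with
  | nil => rfl
  | cons hadj _ => exact absurd hadj (hu _)

def incidenceGraph (s : Finset V) (P : V → Finset V) : SimpleGraph V :=
  fromRel fun i a => i ∈ s ∧ a ∈ P i

theorem incidenceGraph_adj {s : Finset V} {P : V → Finset V} {u v : V} :
    (incidenceGraph s P).Adj u v ↔ u ≠ v ∧ (u ∈ s ∧ v ∈ P u ∨ v ∈ s ∧ u ∈ P v) :=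
  fromRel_adj _ _ _

/-- Double counting gives an `a` lying in a single `P i`. Removing `i` isolates both `i` and `a`,
so putting back the two edges at `i` closes no cycle. -/
theorem isAcyclic_incidenceGraph [DecidableEq V] {s : Finset V} {P : V → Finset V}
    (hP : ∀ i ∈ s, (P i).card = 2) (hdisj : ∀ i ∈ s, Disjoint s (P i))
    (h : HasHallSurplus s P) : (incidenceGraph s P).IsAcyclic := by
  induction s using Finset.strongInduction with
  | H s ih =>
  rcases s.eq_empty_or_nonempty with rfl | hs
  · convert isAcyclic_bot
    ext u v
    simp [incidenceGraph_adj]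
  obtain ⟨i, hi, a, ha, hown⟩ := h.exists_mem_forall_mem_eq hP hs
  obtain ⟨a', ha', ha'a⟩ := exists_mem_ne (h.one_lt_card hi) a
  have hPi : ∀ b, b ∈ P i ↔ b = a ∨ b = a' := by
    have : {a, a'} = P i := eq_of_subset_of_card_le (by simp [insert_subset_iff, ha, ha'])
      (by simp [hP i hi, ha'a.symm])
    simp [← this]
  have hia : i ≠ a := fun hia => Finset.disjoint_left.1 (hdisj i hi) hi (hia ▸ ha)
  have hia' : i ≠ a' := fun hia => Finset.disjoint_left.1 (hdisj i hi) hi (hia ▸ ha')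
  have has : a ∉ s := fun has => Finset.disjoint_left.1 (hdisj i hi) has ha
  have his : ∀ j ∈ s, i ∉ P j := fun j hj hij => Finset.disjoint_left.1 (hdisj j hj) hi hij
  set s' := s.erase i
  have IH := ih s' (erase_ssubset hi) (fun j hj => hP j (mem_of_mem_erase hj))
    (fun j hj => (hdisj j (mem_of_mem_erase hj)).mono_left (erase_subset _ _))
    (h.anti (erase_subset _ _))
  have heq : incidenceGraph s P = incidenceGraph s' P ⊔ edge i a' ⊔ edge i a := by
    ext u v
    simp only [sup_adj, incidenceGraph_adj, edge_adj, s', mem_erase]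
    grind
  rw [heq]
  refine IsAcyclic.sup_edge_of_not_reachable (fun hr => ?_)
    (IsAcyclic.sup_edge_of_not_reachable (fun hr => hia' (hr.eq_of_forall_not_adj ?_)) IH)
  · refine hia (hr.symm.eq_of_forall_not_adj ?_).symm
    intro w hw
    simp only [sup_adj, incidenceGraph_adj, edge_adj, s', mem_erase] at hw
    grind
  · intro w hw
    simp only [incidenceGraph_adj, s', mem_erase] at hw
    grind

theorem IsTree.eq_of_adj_of_dist_add_one (hT : G.IsTree) (r : V) {a w₁ w₂ : V}
    (h₁ : G.Adj w₁ a) (h₂ : G.Adj w₂ a) (hd₁ : G.dist r w₁ + 1 = G.dist r a)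
    (hd₂ : G.dist r w₂ + 1 = G.dist r a) : w₁ = w₂ := by
  classical
  have hpath : ∀ {w} (h : G.Adj w a), G.dist r w + 1 = G.dist r a →
      ∃ p : G.Walk r w, (p.concat h).IsPath := by
    intro w h hd
    obtain ⟨p, hp, hlen⟩ := hT.connected.exists_path_of_dist r w
    refine ⟨p, hp.concat (fun ha => ?_) h⟩
    have := dist_le (p.takeUntil a ha)
    have := p.length_takeUntil_le_length ha
    omega
  obtain ⟨p₁, hp₁⟩ := hpath h₁ hd₁
  obtain ⟨p₂, hp₂⟩ := hpath h₂ hd₂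
  have := (hT.isAcyclic.subsingleton_path r a).elim ⟨_, hp₁⟩ ⟨_, hp₂⟩
  exact (Walk.concat_inj (congrArg Subtype.val this)).1

theorem IsTree.exists_adj_dist_eq_add_one [G.LocallyFinite] (hT : G.IsTree) (r : V)
    {x : V} (hx : 1 < (G.neighborFinset x).card) :
    ∃ y, G.Adj x y ∧ G.dist r y = G.dist r x + 1 := by
  obtain ⟨y₁, hy₁, y₂, hy₂, hne⟩ := Finset.one_lt_card.1 hx
  rw [mem_neighborFinset] at hy₁ hy₂
  rcases hT.dist_eq_dist_add_one_of_adj r hy₁ with h₁ | h₁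
  · rcases hT.dist_eq_dist_add_one_of_adj r hy₂ with h₂ | h₂
    · exact absurd (hT.eq_of_adj_of_dist_add_one r hy₁.symm hy₂.symm h₁.symm h₂.symm) hne
    · exact ⟨y₂, hy₂, h₂⟩
  · exact ⟨y₁, hy₁, h₁⟩

/-- Root the tree at a vertex `r ∈ X`: sending each `x ∈ X` to one of its children is injective,
and `r` has a second child besides. -/
theorem IsTree.hasHallSurplus [Fintype V] [DecidableEq V] [DecidableRel G.Adj] (hT : G.IsTree)
    {B : Finset V} (hB : ∀ b ∈ B, 1 < (G.neighborFinset b).card) :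
    HasHallSurplus B (G.neighborFinset ·) := by
  rintro X hXB ⟨r, hr⟩
  have hchild : ∀ x ∈ X, ∃ y, G.Adj x y ∧ G.dist r y = G.dist r x + 1 :=
    fun x hx => hT.exists_adj_dist_eq_add_one r (hB x (hXB hx))
  choose! f hfadj hfdist using hchild
  have hinj : Set.InjOn f X := fun x hx y hy hxy =>
    hT.eq_of_adj_of_dist_add_one r (hfadj x hx) (hxy ▸ hfadj y hy) (hfdist x hx).symm
      (hxy ▸ (hfdist y hy).symm)
  obtain ⟨g, hg, hgf⟩ := exists_mem_ne (hB r (hXB hr)) (f r)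
  rw [mem_neighborFinset] at hg
  have hgf' : g ∉ X.image f := by
    rintro hmem
    obtain ⟨x, hx, rfl⟩ := mem_image.1 hmem
    have hdg : G.dist r r + 1 = G.dist r (f x) := by
      rw [dist_self, dist_eq_one_iff_adj.2 hg]
    obtain rfl := hT.eq_of_adj_of_dist_add_one r (hfadj x hx) hg (hfdist x hx).symm hdg
    exact hgf rfl
  have hsub : insert g (X.image f) ⊆ X.biUnion (G.neighborFinset ·) := by
    refine insert_subset (mem_biUnion.2 ⟨r, hr, (mem_neighborFinset _ _ _).2 hg⟩) ?_
    exact image_subset_iff.2 fun x hx =>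
      mem_biUnion.2 ⟨x, hx, (mem_neighborFinset _ _ _).2 (hfadj x hx)⟩
  calc X.card < (insert g (X.image f)).card := by
        rw [card_insert_of_notMem hgf', card_image_of_injOn hinj]
        omega
    _ ≤ _ := card_le_card hsub

end SimpleGraph

section MainSteps

variable [Fintype V] [DecidableEq V] {G : SimpleGraph V}

open SimpleGraph in
theorem exists_isTree_isStrongUniqueIndep (hG : G.Connected) {S : Finset V}
    (hS : IsStabSystem G S) (huniq : ∀ S', IsStabSystem G S' → S' = S)
    (hSc : IsStableSet G Sᶜ) : ∃ T ≤ G, T.IsTree ∧ IsStrongUniqueIndep T := by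
  classical
  obtain ⟨Q, hQ, hQh⟩ := (hS.hasHallSurplus_compl huniq hSc).exists_card_eq_two
  have hQadj : ∀ b ∈ Sᶜ, ∀ a ∈ Q b, G.Adj b a := fun b hb a ha =>
    (mem_neighborFinset _ _ _).1 ((hQ b hb).1 ha)
  have hFG : incidenceGraph Sᶜ Q ≤ G := by
    rintro u v ⟨-, ⟨hu, hv⟩ | ⟨hv, hu⟩⟩
    exacts [hQadj u hu v hv, (hQadj v hv u hu).symm]
  have hF : (incidenceGraph Sᶜ Q).IsAcyclic :=
    isAcyclic_incidenceGraph (fun b hb => (hQ b hb).2)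
      (fun b hb => Finset.disjoint_left.2 fun a ha haQ => hSc b hb a ha (hQadj b hb a haQ)) hQh
  obtain ⟨T, hFT, hTG, hT⟩ := hG.exists_isTree_le_of_le_of_isAcyclic hFG hF
  refine ⟨T, hTG, hT, isStrongUniqueIndep_of_hasHallSurplus (hSc.anti hTG)
    (by rw [compl_compl]; exact hS.1.anti hTG) (hQh.mono fun b hb a ha => ?_)⟩
  exact (mem_neighborFinset _ _ _).2 (hFT (incidenceGraph_adj.2
    ⟨(hQadj b hb a ha).ne, Or.inl ⟨hb, ha⟩⟩))

theorem IsStrongUniqueIndep.exists_isStableSet_pendant_mem (h : IsStrongUniqueIndep G) :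
    ∃ C : Finset V, IsStableSet G C ∧ IsStableSet G Cᶜ ∧ Cᶜ.card ≤ C.card ∧
      ∀ v, IsPendant G v → v ∈ C := by
  classical
  obtain ⟨S, hS, huniq, hSc⟩ := h
  refine ⟨S, hS.1, hSc, hS.2 ▸ hSc.card_le_stabNum, fun v hv => by_contra fun hvS => ?_⟩
  have := (hS.hasHallSurplus_compl huniq hSc).one_lt_card (mem_compl.2 hvS)
  rw [isPendant_iff_card_neighborFinset] at hv
  omega

theorem SimpleGraph.IsTree.isStrongUniqueIndep (hG : G.IsTree) {C : Finset V}
    (hC : IsStableSet G C) (hCc : IsStableSet G Cᶜ) (hcard : Cᶜ.card ≤ C.card)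
    (hpend : ∀ v, IsPendant G v → v ∈ C) : IsStrongUniqueIndep G := by
  classical
  refine isStrongUniqueIndep_of_hasHallSurplus hCc (by rwa [compl_compl]) (hG.hasHallSurplus ?_)
  intro b hb
  have hbC : b ∉ C := mem_compl.1 hb
  have h1 : (G.neighborFinset b).card ≠ 1 :=
    fun h => hbC (hpend b (isPendant_iff_card_neighborFinset.2 h))
  have h0 : (G.neighborFinset b).card ≠ 0 := by
    intro h0
    have hisol : ∀ w, ¬ G.Adj b w := fun w hw =>
      notMem_empty w (card_eq_zero.1 h0 ▸ (G.mem_neighborFinset b w).2 hw)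
    have hC : C.card = 0 := card_eq_zero.2 <| eq_empty_of_forall_notMem fun v hv =>
      hbC (((hG.connected b v).eq_of_forall_not_adj hisol) ▸ hv)
    have := card_pos.2 ⟨b, hb⟩
    omega
  omega

end MainSteps

/-- For a connected graph `G`, the following are equivalent:
(i) `G` is a strong unique independence graph; (ii) `G` is bipartite and has a
spanning tree that is a strong unique independence graph; (iii) `G` is
bipartite and has an α⁻-stable spanning tree all of whose pendant vertices lie
in a larger color class of that tree; (iv) `G` is an α⁻-stable bipartite graph
having a unique stability system, which is one of the color classes of `G`. -/
theorem stmt6 {V : Type*} [Fintype V] [DecidableEq V] (G : SimpleGraph V)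
    (hc : G.Connected) :
    List.TFAE
      [ IsStrongUniqueIndep G,
        IsBipartiteGr G ∧ ∃ T : SimpleGraph V, T ≤ G ∧ T.IsTree ∧ IsStrongUniqueIndep T,
        IsBipartiteGr G ∧ ∃ T : SimpleGraph V, T ≤ G ∧ T.IsTree ∧ AlphaMinusStable T ∧
          ∃ C : Finset V, IsStableSet T C ∧ IsStableSet T Cᶜ ∧ Cᶜ.card ≤ C.card ∧
            ∀ v : V, IsPendant T v → v ∈ C,
        AlphaMinusStable G ∧ ∃ S : Finset V, IsStabSystem G S ∧
          (∀ S' : Finset V, IsStabSystem G S' → S' = S) ∧ IsStableSet G Sᶜ ] := by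
  tfae_have 1 → 2 := fun ⟨S, hS, huniq, hSc⟩ =>
    ⟨⟨S, hS.1, hSc⟩, exists_isTree_isStrongUniqueIndep hc hS huniq hSc⟩
  tfae_have 2 → 3 := fun ⟨hbip, T, hTG, hT, hTS⟩ =>
    ⟨hbip, T, hTG, hT, hTS.alphaMinusStable, hTS.exists_isStableSet_pendant_mem⟩
  tfae_have 3 → 2 := fun ⟨hbip, T, hTG, hT, _, C, hC, hCc, hcard, hpend⟩ =>
    ⟨hbip, T, hTG, hT, hT.isStrongUniqueIndep hC hCc hcard hpend⟩
  tfae_have 2 → 1 := fun ⟨⟨C, hC, hCc⟩, T, hTG, hT, hTS⟩ => hTS.of_le hTG hT.connected hC hCc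
  tfae_have 1 → 4 := fun h => ⟨h.alphaMinusStable, h⟩
  tfae_have 4 → 1 := fun h => h.2
  tfae_finish
end

section
/- Every bistable bipartite graph with at least 4 vertices is α-stable, i.e., it is both α⁻-stable and α⁺-stable. -/
open Finset

variable {V : Type*}

private lemma stab_bdd {V : Type*} [Fintype V] (G : SimpleGraph V) :
    BddAbove {n : ℕ | ∃ S : Finset V, IsStableSet G S ∧ S.card = n} := by
  refine ⟨Fintype.card V, ?_⟩
  rintro n ⟨T, -, rfl⟩
  exact T.card_le_univ

private lemma card_le_stab {V : Type*} [Fintype V] {G : SimpleGraph V} {S : Finset V}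
    (h : IsStableSet G S) : S.card ≤ stabNum G :=
  le_csSup (stab_bdd G) ⟨S, h, rfl⟩

private lemma exists_stab {V : Type*} [Fintype V] (G : SimpleGraph V) :
    ∃ S : Finset V, IsStableSet G S ∧ S.card = stabNum G := by
  have hne : {n : ℕ | ∃ S : Finset V, IsStableSet G S ∧ S.card = n}.Nonempty :=
    ⟨0, ∅, fun u hu => (Finset.notMem_empty u hu).elim, rfl⟩
  exact Nat.sSup_mem hne (stab_bdd G)

/-- Every bistable bipartite graph with at least 4 vertices is
α-stable, i.e. both α⁻-stable and α⁺-stable. -/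
theorem stmt15 {V : Type*} [Fintype V] [DecidableEq V] (G : SimpleGraph V)
    (A : Finset V) (hA : IsStableSet G A) (hAc : IsStableSet G Aᶜ)
    (hSA : IsStabSystem G A) (hSAc : IsStabSystem G Aᶜ)
    (honly : ∀ S : Finset V, IsStabSystem G S → S = A ∨ S = Aᶜ)
    (h4 : 4 ≤ Fintype.card V) :
    AlphaMinusStable G ∧ AlphaPlusStable G := by
  have hcardA : A.card = stabNum G := hSA.2
  have hcardAc : Aᶜ.card = stabNum G := hSAc.2
  have hV : Fintype.card V = stabNum G + stabNum G := by
    have := Finset.card_add_card_compl A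
    omega
  constructor
  · intro u v huv
    set G' := G.deleteEdges {s(u, v)} with hG'
    have hmono : ∀ S : Finset V, IsStableSet G S → IsStableSet G' S := by
      intro S hS a ha b hb hab
      rw [hG', SimpleGraph.deleteEdges_adj] at hab
      exact hS a ha b hb hab.1
    have hge : stabNum G ≤ stabNum G' := hcardA ▸ card_le_stab (hmono A hA)
    refine le_antisymm ?_ hge
    obtain ⟨S, hS, hScard⟩ := exists_stab G'
    rw [← hScard]
    by_contra hgt
    push_neg at hgt
    have huvS : u ∈ S ∧ v ∈ S := by
      by_contra hc
      have hSt : IsStableSet G S := by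
        intro a ha b hb hab
        by_cases he : s(a, b) = s(u, v)
        · rcases Sym2.eq_iff.mp he with ⟨rfl, rfl⟩ | ⟨rfl, rfl⟩
          · exact hc ⟨ha, hb⟩
          · exact hc ⟨hb, ha⟩
        · exact hS a ha b hb (by rw [hG', SimpleGraph.deleteEdges_adj]
                                 exact ⟨hab, by simpa using he⟩)
      exact absurd (card_le_stab hSt) (by omega)
    obtain ⟨huS, hvS⟩ := huvS
    have heraseStable : ∀ w, (w = u ∨ w = v) → IsStableSet G (S.erase w) := by
      intro w hw a ha b hb hab
      by_cases he : s(a, b) = s(u, v)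
      · have hwab : w = a ∨ w = b := by
          rcases Sym2.eq_iff.mp he with ⟨h1, h2⟩ | ⟨h1, h2⟩ <;> rcases hw with rfl | rfl
          · exact Or.inl h1.symm
          · exact Or.inr h2.symm
          · exact Or.inr h2.symm
          · exact Or.inl h1.symm
        rcases hwab with rfl | rfl
        · exact (Finset.notMem_erase _ _) ha
        · exact (Finset.notMem_erase _ _) hb
      · exact hS a (Finset.mem_of_mem_erase ha) b (Finset.mem_of_mem_erase hb)
          (by rw [hG', SimpleGraph.deleteEdges_adj]; exact ⟨hab, by simpa using he⟩)
    have he1 : IsStableSet G (S.erase u) := heraseStable u (Or.inl rfl)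
    have he2 : IsStableSet G (S.erase v) := heraseStable v (Or.inr rfl)
    have hc1 : (S.erase u).card = S.card - 1 := Finset.card_erase_of_mem huS
    have hc2 : (S.erase v).card = S.card - 1 := Finset.card_erase_of_mem hvS
    have hle1 := card_le_stab he1
    have hsys1 : IsStabSystem G (S.erase u) := ⟨he1, by omega⟩
    have hsys2 : IsStabSystem G (S.erase v) := ⟨he2, by omega⟩
    have hne : u ≠ v := huv.ne
    have huNot : u ∉ S.erase u := Finset.notMem_erase u S
    have hvNot : v ∉ S.erase v := Finset.notMem_erase v S
    have huIn : u ∈ S.erase v := Finset.mem_erase.mpr ⟨hne, huS⟩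
    have hvIn : v ∈ S.erase u := Finset.mem_erase.mpr ⟨hne.symm, hvS⟩
    have hSuniv : S = Finset.univ := by
      rcases honly _ hsys1 with h1 | h1 <;> rcases honly _ hsys2 with h2 | h2
      · rw [h2, ← h1] at huIn; exact absurd huIn huNot
      · apply Finset.eq_univ_of_forall
        intro x
        by_cases hx : x ∈ A
        · exact Finset.mem_of_mem_erase (show x ∈ S.erase u by rw [h1]; exact hx)
        · exact Finset.mem_of_mem_erase
            (show x ∈ S.erase v by rw [h2]; exact Finset.mem_compl.mpr hx)
      · apply Finset.eq_univ_of_forall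
        intro x
        by_cases hx : x ∈ A
        · exact Finset.mem_of_mem_erase (show x ∈ S.erase v by rw [h2]; exact hx)
        · exact Finset.mem_of_mem_erase
            (show x ∈ S.erase u by rw [h1]; exact Finset.mem_compl.mpr hx)
      · rw [h2, ← h1] at huIn; exact absurd huIn huNot
    have hScardV : S.card = Fintype.card V := by rw [hSuniv, Finset.card_univ]
    have : (S.erase u).card = stabNum G := hsys1.2
    omega
  · intro u v hne hnadj
    set G'' := G ⊔ SimpleGraph.fromEdgeSet {s(u, v)} with hG''
    obtain ⟨S, hS, hScard⟩ := exists_stab G''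
    have hle : stabNum G'' ≤ stabNum G := by
      rw [← hScard]
      exact card_le_stab (fun a ha b hb hab =>
        hS a ha b hb ((SimpleGraph.sup_adj _ _ _ _).mpr (Or.inl hab)))
    have key : ∃ T : Finset V, IsStableSet G T ∧ T.card = stabNum G ∧ u ∉ T := by
      by_cases hu : u ∈ A
      · exact ⟨Aᶜ, hAc, hcardAc, by simp [hu]⟩
      · exact ⟨A, hA, hcardA, hu⟩
    obtain ⟨T, hT, hTcard, huT⟩ := key
    have hTst : IsStableSet G'' T := by
      intro a ha b hb hab
      rcases (SimpleGraph.sup_adj _ _ _ _).mp hab with h | h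
      · exact hT a ha b hb h
      · rw [SimpleGraph.fromEdgeSet_adj] at h
        rcases Sym2.eq_iff.mp (Set.mem_singleton_iff.mp h.1) with ⟨rfl, rfl⟩ | ⟨rfl, rfl⟩
        · exact huT ha
        · exact huT hb
    exact le_antisymm hle (hTcard ▸ card_le_stab hTst)
end
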